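/- arXiv:2006.16540 — 2 statements merged into one kernel-verified Lean document; each statement's English description precedes it below -/
import Mathlib

section
/- Let X ∈ ℝ^{k×m} be a full-rank matrix with k ≥ m ≥ 1 such that every column of X has Euclidean norm r > 0, and let B = 1ₘ1ₘᵀ be the m×m all-ones matrix. Then trace(B(XᵀX)⁻¹) ≥ 1/r². -/
/-!
Since `X` has full column rank, `A = XᵀX` is positive definite and `trace (B A⁻¹) = 1ᵀ A⁻¹ 1`.
Cauchy–Schwarz for the form of `A⁻¹`, applied to `1` and `A 1`, gives
`m² = (1ᵀ1)² ≤ (1ᵀ A 1) (1ᵀ A⁻¹ 1)`, while `1ᵀ A 1 = ‖X 1‖²` is the squared norm of the sum of the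
columns of `X`, hence at most `(m r)²` by the triangle inequality.
-/

open Matrix

namespace Matrix

variable {m n K : Type*} [Fintype n]

theorem mulVec_injective_of_rank_eq_card [Field K] (A : Matrix m n K)
    (hA : A.rank = Fintype.card n) : Function.Injective A.mulVec := by
  have h := A.mulVecLin.finrank_range_add_finrank_ker
  rw [← rank, hA, Module.finrank_fintype_fun_eq_card] at h
  have hker : LinearMap.ker A.mulVecLin = ⊥ := Submodule.finrank_eq_zero.mp (by omega)
  exact LinearMap.ker_eq_bot.mp hker

theorem trace_of_one_mul [CommSemiring K] (M : Matrix n n K) :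
    (of (fun _ _ => (1 : K)) * M).trace = (1 : n → K) ⬝ᵥ M *ᵥ 1 := by
  simp only [trace, diag, mul_apply, of_apply, one_mul, dotProduct, mulVec, Pi.one_apply, mul_one]
  exact Finset.sum_comm

theorem PosDef.sq_dotProduct_self_le [DecidableEq n] [Field K] [LinearOrder K]
    [IsStrictOrderedRing K] [StarRing K] [TrivialStar K] {A : Matrix n n K} (hA : A.PosDef)
    (x : n → K) : (x ⬝ᵥ x) ^ 2 ≤ (x ⬝ᵥ A *ᵥ x) * (x ⬝ᵥ A⁻¹ *ᵥ x) := by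
  have hunit : IsUnit A.det := (isUnit_iff_isUnit_det A).mp hA.isUnit
  have hsymm (v w : n → K) : (A *ᵥ v) ⬝ᵥ w = v ⬝ᵥ A *ᵥ w := by
    rw [dotProduct_mulVec, ← mulVec_transpose, ← conjTranspose_eq_transpose_of_trivial, hA.1]
  have hnonneg (v : n → K) : 0 ≤ toBilin' A⁻¹ v v := by
    simpa [toBilin'_apply'] using hA.inv.posSemidef.dotProduct_mulVec_nonneg v
  have hAinvA : A⁻¹ *ᵥ A *ᵥ x = x := by rw [mulVec_mulVec, nonsing_inv_mul A hunit, one_mulVec]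
  have hAAinv : A *ᵥ A⁻¹ *ᵥ x = x := by rw [mulVec_mulVec, mul_nonsing_inv A hunit, one_mulVec]
  have hCS := (toBilin' A⁻¹).apply_mul_apply_le_of_forall_zero_le hnonneg x (A *ᵥ x)
  simp only [toBilin'_apply', hAinvA, hsymm, hAAinv] at hCS
  linarith

theorem one_dotProduct_transpose_mul_self_le [Fintype m] (X : Matrix m n ℝ) :
    (1 : n → ℝ) ⬝ᵥ (Xᵀ * X) *ᵥ 1 ≤ (∑ j, √(∑ i, X i j ^ 2)) ^ 2 := by
  have hentry : ∀ j j', (Xᵀ * X) j j' ≤ √(∑ i, X i j ^ 2) * √(∑ i, X i j' ^ 2) := fun j j' =>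
    Real.sum_mul_le_sqrt_mul_sqrt _ _ _
  rw [sq, Finset.sum_mul_sum]
  simp only [mulVec, dotProduct, Pi.one_apply, one_mul, mul_one]
  exact Finset.sum_le_sum fun j _ => Finset.sum_le_sum fun j' _ => hentry j j'

end Matrix

theorem trace_allOnes_mul_inv_ge_general (k m : ℕ) (hm : 1 ≤ m)
    (X : Matrix (Fin k) (Fin m) ℝ) (hX : X.rank = m)
    (r : ℝ) (hcol : ∀ j, Real.sqrt (∑ i, X i j ^ 2) = r) :
    ∀ B : Matrix (Fin m) (Fin m) ℝ,
      B = Matrix.of (fun _ _ => (1 : ℝ)) →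
      1 / r ^ 2 ≤ (B * (Xᵀ * X)⁻¹).trace := by
  rintro B rfl
  have hinj := X.mulVec_injective_of_rank_eq_card (by rw [hX, Fintype.card_fin])
  have hA : (Xᵀ * X).PosDef := by
    simpa only [conjTranspose_eq_transpose_of_trivial] using PosDef.conjTranspose_mul_self X hinj
  have hCS := hA.sq_dotProduct_self_le 1
  have hones : (1 : Fin m → ℝ) ⬝ᵥ 1 = m := by simp
  have hquad : (1 : Fin m → ℝ) ⬝ᵥ (Xᵀ * X) *ᵥ 1 ≤ m ^ 2 * r ^ 2 := by
    simpa only [hcol, Finset.sum_const, Finset.card_univ, Fintype.card_fin, nsmul_eq_mul,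
      mul_pow] using X.one_dotProduct_transpose_mul_self_le
  rw [trace_of_one_mul]
  set c := (1 : Fin m → ℝ) ⬝ᵥ (Xᵀ * X)⁻¹ *ᵥ 1
  have hc : 0 ≤ c := by simpa using hA.inv.posSemidef.dotProduct_mulVec_nonneg 1
  have hmrc : (m : ℝ) ^ 2 * 1 ≤ m ^ 2 * (r ^ 2 * c) :=
    calc (m : ℝ) ^ 2 * 1 = ((1 : Fin m → ℝ) ⬝ᵥ 1) ^ 2 := by rw [hones, mul_one]
      _ ≤ ((1 : Fin m → ℝ) ⬝ᵥ (Xᵀ * X) *ᵥ 1) * c := hCS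
      _ ≤ m ^ 2 * r ^ 2 * c := mul_le_mul_of_nonneg_right hquad hc
      _ = m ^ 2 * (r ^ 2 * c) := mul_assoc _ _ _
  have hrc : 1 ≤ r ^ 2 * c := le_of_mul_le_mul_left hmrc (by positivity)
  have hr : 0 < r ^ 2 := (sq_nonneg r).lt_of_ne fun h => by norm_num [← h] at hrc
  rwa [div_le_iff₀ hr, mul_comm]

/-- paper's Lemma A.3: for full-rank `X ∈ ℝ^{k×m}` with `k ≥ m ≥ 1`, all of
whose columns have Euclidean norm `r > 0`, and `B = 1ₘ1ₘᵀ`,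
`trace(B(XᵀX)⁻¹) ≥ 1/r²`. -/
theorem trace_allOnes_mul_inv_ge (k m : ℕ) (hm : 1 ≤ m) (hk : m ≤ k)
    (X : Matrix (Fin k) (Fin m) ℝ) (hX : X.rank = m)
    (r : ℝ) (hr : 0 < r) (hcol : ∀ j, Real.sqrt (∑ i, X i j ^ 2) = r) :
    ∀ B : Matrix (Fin m) (Fin m) ℝ,
      B = Matrix.of (fun _ _ => (1 : ℝ)) →
      1 / r ^ 2 ≤ (B * (Xᵀ * X)⁻¹).trace :=
  trace_allOnes_mul_inv_ge_general k m hm X hX r hcol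
end

section
/- Let σ(x) = 1/(1 + e^{−x}) be the logistic sigmoid. Let q₁ ≥ 0 and define recursively q_{ℓ+1} = ∫_ℝ σ(x)² dN(0, q_ℓ)(x) and d_{ℓ+1} = ∫_ℝ σ′(x)² dN(0, q_ℓ)(x), and let Θ₁ = q₁ and Θ_{ℓ+1} = Θ_ℓ · d_{ℓ+1} + q_{ℓ+1}. Then for every L ≥ 2, Θ_L ≥ 1/4. (This is the paper's Lemma B.1: the diagonal NTK value Θ_∞^{(L)}(x, x) of a depth-L sigmoid network is bounded below by 1/4.) -/
/-!
Since `σ(x) + σ(-x) = 1`, pointwise `σ(x)² + σ(-x)² ≥ 1/2`; averaging against the symmetric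
law `N(0, q)` gives `E[σ²] ≥ 1/4`, i.e. `q_ℓ ≥ 1/4` for `ℓ ≥ 2`. All terms of the recursion
`Θ_{ℓ+1} = Θ_ℓ d_{ℓ+1} + q_{ℓ+1}` are nonnegative, so `Θ_L ≥ q_L ≥ 1/4`.
-/

open MeasureTheory ProbabilityTheory Real

instance ProbabilityTheory.isNegInvariant_gaussianReal_zero (v : NNReal) :
    (gaussianReal 0 v).IsNegInvariant :=
  ⟨by simpa [Measure.neg_def] using gaussianReal_map_neg (μ := 0) (v := v)⟩

theorem MeasureTheory.quarter_le_integral_sq_of_add_comp_neg_eq_one {G : Type*} [AddGroup G]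
    [MeasurableSpace G] [MeasurableNeg G] {μ : Measure G} [IsProbabilityMeasure μ]
    [μ.IsNegInvariant] {f : G → ℝ} (hf : ∀ x, f x + f (-x) = 1)
    (hint : Integrable (fun x => f x ^ 2) μ) :
    (1 / 4 : ℝ) ≤ ∫ x, f x ^ 2 ∂μ := by
  have hpointwise : ∀ x, (1 / 2 : ℝ) ≤ f x ^ 2 + f (-x) ^ 2 := fun x => by
    nlinarith [hf x, sq_nonneg (f x - f (-x))]
  have hsum : (1 / 2 : ℝ) ≤ ∫ x, (f x ^ 2 + f (-x) ^ 2) ∂μ := by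
    simpa using integral_mono (integrable_const (1 / 2 : ℝ))
      (hint.add hint.comp_neg) hpointwise
  rw [integral_add hint hint.comp_neg, integral_neg_eq_self (fun x => f x ^ 2)] at hsum
  linarith

theorem quarter_le_integral_sigmoid_sq_gaussianReal (v : NNReal) :
    (1 / 4 : ℝ) ≤ ∫ x, sigmoid x ^ 2 ∂(gaussianReal 0 v) := by
  refine quarter_le_integral_sq_of_add_comp_neg_eq_one (fun x => by rw [sigmoid_neg]; ring) ?_
  refine Integrable.of_bound (by fun_prop) 1 (.of_forall fun x => ?_)
  rw [norm_pow, norm_of_nonneg (sigmoid_nonneg x)]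
  exact pow_le_one₀ (sigmoid_nonneg x) (sigmoid_le_one x)

theorem le_of_affine_recursion {Θ a b : ℕ → ℝ} {c : ℝ} (hc : 0 ≤ c) (hΘ₁ : 0 ≤ Θ 1)
    (ha : ∀ ℓ, 1 ≤ ℓ → 0 ≤ a (ℓ + 1)) (hb : ∀ ℓ, 1 ≤ ℓ → c ≤ b (ℓ + 1))
    (hΘ : ∀ ℓ, 1 ≤ ℓ → Θ (ℓ + 1) = Θ ℓ * a (ℓ + 1) + b (ℓ + 1))
    {L : ℕ} (hL : 2 ≤ L) : c ≤ Θ L := by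
  have hnonneg : ∀ ℓ, 1 ≤ ℓ → 0 ≤ Θ ℓ := fun ℓ hℓ => by
    induction ℓ, hℓ using Nat.le_induction with
    | base => exact hΘ₁
    | succ ℓ hℓ ih =>
      rw [hΘ ℓ hℓ]
      nlinarith [ha ℓ hℓ, hb ℓ hℓ]
  obtain ⟨ℓ, rfl⟩ : ∃ ℓ, L = ℓ + 1 := ⟨L - 1, by omega⟩
  have hℓ : 1 ≤ ℓ := by omega
  rw [hΘ ℓ hℓ]
  nlinarith [hnonneg ℓ hℓ, ha ℓ hℓ, hb ℓ hℓ]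

/-- paper's Lemma B.1: for the logistic sigmoid `σ`, the NTK diagonal
recursion `q_{ℓ+1} = E[σ(x)²]`, `d_{ℓ+1} = E[σ′(x)²]` (expectations under `N(0, q_ℓ)`),
`Θ₁ = q₁`, `Θ_{ℓ+1} = Θ_ℓ·d_{ℓ+1} + q_{ℓ+1}`, satisfies `Θ_L ≥ 1/4` for every `L ≥ 2`. -/
theorem ntk_diagonal_lower_bound (q : ℕ → NNReal) (d Θ : ℕ → ℝ)
    (hq : ∀ ℓ, 1 ≤ ℓ →
      (q (ℓ + 1) : ℝ) = ∫ x, (1 / (1 + Real.exp (-x))) ^ 2 ∂(gaussianReal 0 (q ℓ)))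
    (hd : ∀ ℓ, 1 ≤ ℓ →
      d (ℓ + 1) = ∫ x, (deriv (fun y : ℝ => 1 / (1 + Real.exp (-y))) x) ^ 2
        ∂(gaussianReal 0 (q ℓ)))
    (hΘ₁ : Θ 1 = q 1)
    (hΘ : ∀ ℓ, 1 ≤ ℓ → Θ (ℓ + 1) = Θ ℓ * d (ℓ + 1) + q (ℓ + 1))
    (L : ℕ) (hL : 2 ≤ L) :
    (1 / 4 : ℝ) ≤ Θ L := by
  have hd_nonneg : ∀ ℓ, 1 ≤ ℓ → 0 ≤ d (ℓ + 1) := fun ℓ hℓ => by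
    rw [hd ℓ hℓ]
    exact integral_nonneg fun x => sq_nonneg _
  have hq_ge : ∀ ℓ, 1 ≤ ℓ → (1 / 4 : ℝ) ≤ q (ℓ + 1) := fun ℓ hℓ => by
    simpa only [hq ℓ hℓ, one_div, ← sigmoid_def] using
      quarter_le_integral_sigmoid_sq_gaussianReal (q ℓ)
  exact le_of_affine_recursion (b := fun ℓ => (q ℓ : ℝ)) (by norm_num)
    (hΘ₁ ▸ (q 1).coe_nonneg) hd_nonneg hq_ge hΘ hL
end
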